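/- arXiv:2407.19940 — 4 statements merged into one kernel-verified Lean document; each statement's English description precedes it below -/
import Mathlib

section
/- Let G be a simple graph that is the union of cycles γ₁, …, γₙ such that for all i, j there exists a chain r₁ = i, r₂, …, r_m = j with each intersection γ_{r_k} ∩ γ_{r_{k+1}} containing at least one edge. Then G is connected and has no separating vertex, i.e., deleting any single vertex leaves G connected. -/
/-!
A cycle stays connected after deleting one vertex: if the vertex lies on the cycle, what is left
is a path. So, after deleting a vertex `x`, the vertices of each cycle other than `x` are still
pairwise reachable, and two cycles sharing an edge share a vertex other than `x`. The chains of
edge-sharing cycles then join any two remaining vertices; without deleting anything the same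
argument shows that `G` is connected.
-/

namespace SimpleGraph

theorem preconnected_of_chained_cover {W ι : Type*} {H : SimpleGraph W} {S : ι → Set W}
    (R : ι → ι → Prop) (hR : ∀ i j, R i j → (S i ∩ S j).Nonempty)
    (hS : ∀ i, ∀ a ∈ S i, ∀ b ∈ S i, H.Reachable a b) (hcover : ∀ a, ∃ i, a ∈ S i)
    (hchain : ∀ i j : ι, ∃ (m : ℕ) (r : Fin (m + 1) → ι),
      r 0 = i ∧ r (Fin.last m) = j ∧ ∀ k : Fin m, R (r k.castSucc) (r k.succ)) :
    H.Preconnected := by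
  intro a b
  obtain ⟨i, ha⟩ := hcover a
  obtain ⟨j, hb⟩ := hcover b
  obtain ⟨m, r, rfl, rfl, hr⟩ := hchain i j
  suffices ∀ k, ∀ c ∈ S (r k), H.Reachable a c from this _ b hb
  intro k
  induction k using Fin.induction with
  | zero => exact hS _ a ha
  | succ k ih =>
    obtain ⟨c, hc, hc'⟩ := hR _ _ (hr k)
    exact fun d hd => (ih c hc).trans (hS _ c hc' d hd)

variable {V : Type*} {G : SimpleGraph V} {u v u' v' : V}

namespace Walk

theorem exists_mem_support_ne_of_not_nil {p : G.Walk u v} (hp : ¬p.Nil) (x : V) :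
    ∃ y ∈ p.support, y ≠ x := by
  by_cases hux : u = x
  · exact ⟨p.snd, p.getVert_mem_support 1, hux ▸ (p.adj_snd hp).ne'⟩
  · exact ⟨u, p.start_mem_support, hux⟩

theorem exists_ne_mem_support_of_mem_edges {e : Sym2 V} {p : G.Walk u v} {q : G.Walk u' v'}
    (hp : e ∈ p.edges) (hq : e ∈ q.edges) (x : V) :
    ∃ y ≠ x, y ∈ p.support ∧ y ∈ q.support := by
  induction e using Sym2.ind with
  | h a b =>
    have hab : a ≠ b := (p.edges_subset_edgeSet hp).ne
    by_cases hax : a = x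
    · exact ⟨b, fun hbx => hab (hax.trans hbx.symm),
        p.snd_mem_support_of_mem_edges hp, q.snd_mem_support_of_mem_edges hq⟩
    · exact ⟨a, hax, p.fst_mem_support_of_mem_edges hp, q.fst_mem_support_of_mem_edges hq⟩

variable [DecidableEq V]

theorem reachable_of_mem_support (p : G.Walk u v) {a b : V} (ha : a ∈ p.support)
    (hb : b ∈ p.support) : G.Reachable a b :=
  ⟨(p.takeUntil a ha).reverse.append (p.takeUntil b hb)⟩

theorem reachable_induce_of_mem_support {s : Set V} (p : G.Walk u v)
    (hs : ∀ y ∈ p.support, y ∈ s) {a b : V} (ha : a ∈ p.support) (hb : b ∈ p.support) :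
    (G.induce s).Reachable ⟨a, hs a ha⟩ ⟨b, hs b hb⟩ :=
  have hsub : ∀ c (hc : c ∈ p.support), ∀ y ∈ (p.takeUntil c hc).support, y ∈ s :=
    fun _ hc y hy => hs y (p.support_takeUntil_subset_support hc hy)
  ⟨((p.takeUntil a ha).induce s (hsub a ha)).reverse.append
    ((p.takeUntil b hb).induce s (hsub b hb))⟩

theorem IsPath.reachable_induce_ne_end {p : G.Walk u v} (hp : p.IsPath) {a b : V}
    (ha : a ∈ p.support) (hb : b ∈ p.support) (hav : a ≠ v) (hbv : b ≠ v) :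
    (G.induce {y | y ≠ v}).Reachable ⟨a, hav⟩ ⟨b, hbv⟩ :=
  have avoid : ∀ c (hc : c ∈ p.support), c ≠ v → ∀ y ∈ (p.takeUntil c hc).support, y ≠ v :=
    fun _ hc hcv _ hy hyv => endpoint_notMem_support_takeUntil hp hc hcv.symm (hyv ▸ hy)
  ⟨((p.takeUntil a ha).induce _ (avoid a ha hav)).reverse.append
    ((p.takeUntil b hb).induce _ (avoid b hb hbv))⟩

theorem IsCycle.reachable_induce_ne {c : G.Walk u u} (hc : c.IsCycle) {x a b : V}
    (ha : a ∈ c.support) (hb : b ∈ c.support) (hax : a ≠ x) (hbx : b ≠ x) :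
    (G.induce {y | y ≠ x}).Reachable ⟨a, hax⟩ ⟨b, hbx⟩ := by
  by_cases hx : x ∈ c.support
  · -- rotated to start at `x`, the cycle is `x` followed by a path ending at `x`
    have hc' := hc.rotate hx
    have mem_tail : ∀ y ∈ c.support, y ≠ x → y ∈ (c.rotate x hx).tail.support := by
      intro y hy hyx
      rw [← mem_support_rotate_iff c x hx, ← cons_support_tail hc'.not_nil] at hy
      exact (List.mem_cons.mp hy).resolve_left hyx
    exact hc'.isPath_tail.reachable_induce_ne_end (mem_tail a ha hax) (mem_tail b hb hbx) hax hbx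
  · exact c.reachable_induce_of_mem_support (fun y hy (hyx : y = x) => hx (hyx ▸ hy)) ha hb

end Walk

end SimpleGraph

open SimpleGraph

theorem stmt_2_general {V : Type*} [DecidableEq V] (G : SimpleGraph V)
    (n : ℕ) (hn : 0 < n) (v : Fin n → V) (γ : ∀ i : Fin n, G.Walk (v i) (v i))
    (hcyc : ∀ i, (γ i).IsCycle)
    (hvert : ∀ x : V, ∃ i, x ∈ (γ i).support)
    (hchain : ∀ i j : Fin n, ∃ (m : ℕ) (r : Fin (m + 1) → Fin n),
      r 0 = i ∧ r (Fin.last m) = j ∧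
      ∀ k : Fin m, ∃ e : Sym2 V,
        e ∈ (γ (r k.castSucc)).edges ∧ e ∈ (γ (r k.succ)).edges) :
    G.Connected ∧ ∀ x : V, (G.induce {y : V | y ≠ x}).Connected := by
  let i₀ : Fin n := ⟨0, hn⟩
  let ShareEdge (i j : Fin n) : Prop := ∃ e, e ∈ (γ i).edges ∧ e ∈ (γ j).edges
  refine ⟨(connected_iff _).mpr ⟨?_, ⟨v i₀⟩⟩, fun x => (connected_iff _).mpr ⟨?_, ?_⟩⟩
  · refine preconnected_of_chained_cover (S := fun i => {y | y ∈ (γ i).support}) ShareEdge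
      (fun i j hij => ?_) (fun i _ ha _ hb => (γ i).reachable_of_mem_support ha hb) hvert hchain
    obtain ⟨e, hi, hj⟩ := hij
    exact ⟨e.out.1, Walk.mem_support_of_mem_edges hi e.out_fst_mem,
      Walk.mem_support_of_mem_edges hj e.out_fst_mem⟩
  · refine preconnected_of_chained_cover (S := fun i => {y | y.1 ∈ (γ i).support}) ShareEdge
      (fun i j hij => ?_) (fun i a ha b hb => (hcyc i).reachable_induce_ne ha hb a.2 b.2)
      (fun a => hvert a) hchain
    obtain ⟨e, hi, hj⟩ := hij
    obtain ⟨y, hyx, hyi, hyj⟩ := Walk.exists_ne_mem_support_of_mem_edges hi hj x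
    exact ⟨⟨y, hyx⟩, hyi, hyj⟩
  · obtain ⟨y, -, hyx⟩ := Walk.exists_mem_support_ne_of_not_nil (hcyc i₀).not_nil x
    exact ⟨⟨y, hyx⟩⟩

/-- If a finite simple graph is the union of cycles γ₁, …, γₙ such that any two
cycles are linked by a chain of cycles whose consecutive members share an edge,
then the graph is connected and has no separating vertex. -/
theorem stmt_2 {V : Type*} [Fintype V] [DecidableEq V] (G : SimpleGraph V)
    (n : ℕ) (hn : 0 < n) (v : Fin n → V) (γ : ∀ i : Fin n, G.Walk (v i) (v i))
    (hcyc : ∀ i, (γ i).IsCycle)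
    (hvert : ∀ x : V, ∃ i, x ∈ (γ i).support)
    (hedge : ∀ e ∈ G.edgeSet, ∃ i, e ∈ (γ i).edges)
    (hchain : ∀ i j : Fin n, ∃ (m : ℕ) (r : Fin (m + 1) → Fin n),
      r 0 = i ∧ r (Fin.last m) = j ∧
      ∀ k : Fin m, ∃ e : Sym2 V,
        e ∈ (γ (r k.castSucc)).edges ∧ e ∈ (γ (r k.succ)).edges) :
    G.Connected ∧ ∀ x : V, (G.induce {y : V | y ≠ x}).Connected :=
  stmt_2_general G n hn v γ hcyc hvert hchain
end

section
/- In a free group, any two commuting elements lie in a common cyclic subgroup; consequently every abelian subgroup of a free group is cyclic (trivial or infinite cyclic). -/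
/-!
By Nielsen–Schreier every subgroup of a free group is free. A free group on a basis containing
two distinct elements `i ≠ j` is not abelian: sending `i, j` to the transpositions `(0 1)` and
`(0 2)` of `Fin 3` gives non-commuting images. Hence an abelian subgroup is free on at most one
generator, i.e. cyclic, and two commuting elements generate an abelian, hence cyclic, subgroup.
-/

namespace FreeGroup

theorem eq_of_commute_of {ι : Type*} {i j : ι} (h : Commute (of i) (of j)) : i = j := by
  classical
  by_contra hne
  have h_perm := congrArg
    (lift fun k => if k = i then Equiv.swap (0 : Fin 3) 1 else Equiv.swap 0 2) h.eq
  simp only [_root_.map_mul, lift_apply_of, if_pos, if_neg (Ne.symm hne)] at h_perm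
  exact absurd h_perm (by decide)

theorem isCyclic_of_subsingleton {ι : Type*} [Subsingleton ι] : IsCyclic (FreeGroup ι) := by
  cases isEmpty_or_nonempty ι
  · infer_instance
  · have := uniqueOfSubsingleton (Classical.arbitrary ι)
    infer_instance

end FreeGroup

theorem IsFreeGroup.isCyclic_of_isMulCommutative {G : Type*} [Group G] [IsFreeGroup G]
    [IsMulCommutative G] : IsCyclic G := by
  obtain ⟨ι, ⟨b⟩⟩ := IsFreeGroup.nonempty_basis (G := G)
  have : Subsingleton ι := ⟨fun i j => FreeGroup.eq_of_commute_of <| by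
    simpa only [b.repr_apply_coe] using Commute.map (mul_comm' (b i) (b j)) b.repr⟩
  exact b.repr.isCyclic.mpr FreeGroup.isCyclic_of_subsingleton

theorem IsFreeGroup.exists_mem_zpowers_of_commute {G : Type*} [Group G] [IsFreeGroup G]
    {x y : G} (hxy : Commute x y) : ∃ z : G, x ∈ Subgroup.zpowers z ∧ y ∈ Subgroup.zpowers z := by
  have h_comm : ∀ a ∈ ({x, y} : Set G), ∀ b ∈ ({x, y} : Set G), a * b = b * a := by
    rintro a (rfl | rfl) b (rfl | rfl)
    exacts [rfl, hxy, hxy.symm, rfl]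
  have := Subgroup.isMulCommutative_closure h_comm
  obtain ⟨z, hz⟩ := (Subgroup.closure {x, y}).isCyclic_iff_exists_zpowers_eq_top.mp
    isCyclic_of_isMulCommutative
  exact ⟨z, hz ▸ Subgroup.subset_closure (by simp), hz ▸ Subgroup.subset_closure (by simp)⟩

/-- In a free group, any two commuting elements lie in a common cyclic subgroup;
consequently every abelian subgroup of a free group is cyclic. -/
theorem stmt_10 {α : Type*} :
    (∀ x y : FreeGroup α, Commute x y →
      ∃ z : FreeGroup α, x ∈ Subgroup.zpowers z ∧ y ∈ Subgroup.zpowers z) ∧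
    (∀ H : Subgroup (FreeGroup α),
      (∀ a ∈ H, ∀ b ∈ H, a * b = b * a) → IsCyclic ↥H) :=
  ⟨fun _ _ => IsFreeGroup.exists_mem_zpowers_of_commute, fun _ hH =>
    have := IsMulCommutative.of_setLike_mul_comm hH
    IsFreeGroup.isCyclic_of_isMulCommutative⟩
end

section
/- In the Artin group A = ⟨a, b, c | aba = bab, bcb = cbc, cac = aca⟩, the elements abcabc and bacbac commute. -/
/-- The braid relations of the `(3,3,3)`-triangle Artin group
`⟨a, b, c | aba = bab, bcb = cbc, cac = aca⟩`, with `a = of 0`, `b = of 1`,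
`c = of 2`. -/
def artin333Rel : Set (FreeGroup (Fin 3)) :=
  { FreeGroup.of 0 * FreeGroup.of 1 * FreeGroup.of 0 *
      (FreeGroup.of 1 * FreeGroup.of 0 * FreeGroup.of 1)⁻¹,
    FreeGroup.of 1 * FreeGroup.of 2 * FreeGroup.of 1 *
      (FreeGroup.of 2 * FreeGroup.of 1 * FreeGroup.of 2)⁻¹,
    FreeGroup.of 2 * FreeGroup.of 0 * FreeGroup.of 2 *
      (FreeGroup.of 0 * FreeGroup.of 2 * FreeGroup.of 0)⁻¹ }

namespace Artin333Aux

local notation "a" => (PresentedGroup.of 0 : PresentedGroup artin333Rel)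
local notation "b" => (PresentedGroup.of 1 : PresentedGroup artin333Rel)
local notation "c" => (PresentedGroup.of 2 : PresentedGroup artin333Rel)

private lemma rel_aux {r : FreeGroup (Fin 3)} (h : r ∈ artin333Rel) :
    PresentedGroup.mk artin333Rel r = 1 :=
  (QuotientGroup.eq_one_iff r).2 (Subgroup.subset_normalClosure h)

private lemma hab : a * b * a = b * a * b := by
  have h := rel_aux (Set.mem_insert _ _)
  simp only [map_mul, map_inv] at h
  exact mul_inv_eq_one.mp h

private lemma hbc : b * c * b = c * b * c := by
  have h := rel_aux (Set.mem_insert_of_mem _ (Set.mem_insert _ _))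
  simp only [map_mul, map_inv] at h
  exact mul_inv_eq_one.mp h

private lemma hca : c * a * c = a * c * a := by
  have h := rel_aux (Set.mem_insert_of_mem _ (Set.mem_insert_of_mem _ rfl))
  simp only [map_mul, map_inv] at h
  exact mul_inv_eq_one.mp h

private lemma r1 (t : PresentedGroup artin333Rel) : a * (b * (a * t)) = b * (a * (b * t)) := by
  simp only [← mul_assoc]; rw [hab]

private lemma r2 (t : PresentedGroup artin333Rel) : b * (c * (b * t)) = c * (b * (c * t)) := by
  simp only [← mul_assoc]; rw [hbc]

private lemma r3 (t : PresentedGroup artin333Rel) : c * (a * (c * t)) = a * (c * (a * t)) := by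
  simp only [← mul_assoc]; rw [hca]

end Artin333Aux

/-- In the `(3,3,3)` Artin group `⟨a, b, c | aba = bab, bcb = cbc, cac = aca⟩`,
the elements `abcabc` and `bacbac` commute. -/
theorem stmt_15 :
    Commute (PresentedGroup.of 0 * PresentedGroup.of 1 * PresentedGroup.of 2 *
        PresentedGroup.of 0 * PresentedGroup.of 1 * PresentedGroup.of 2 :
        PresentedGroup artin333Rel)
      (PresentedGroup.of 1 * PresentedGroup.of 0 * PresentedGroup.of 2 *
        PresentedGroup.of 1 * PresentedGroup.of 0 * PresentedGroup.of 2) := by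
  open Artin333Aux in
  show _ * _ = _ * _
  set a : PresentedGroup artin333Rel := PresentedGroup.of 0 with ha
  set b : PresentedGroup artin333Rel := PresentedGroup.of 1 with hb
  set c : PresentedGroup artin333Rel := PresentedGroup.of 2 with hc
  calc a * b * c * a * b * c * (b * a * c * b * a * c)
    _ = a * (b * (c * (a * (b * (c * (b * (a * (c * (b * (a * (c))))))))))) := by simp only [mul_assoc]
    _ = a * (b * (c * (a * (c * (b * (c * (a * (c * (b * (a * (c))))))))))) := by simp only [mul_right_inj]; exact r2 _
    _ = a * (b * (a * (c * (a * (b * (c * (a * (c * (b * (a * (c))))))))))) := by simp only [mul_right_inj]; exact r3 _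
    _ = b * (a * (b * (c * (a * (b * (c * (a * (c * (b * (a * (c))))))))))) := by first | (simp only [mul_right_inj]; exact r1 _) | exact r1 _
    _ = b * (a * (b * (c * (a * (b * (a * (c * (a * (b * (a * (c))))))))))) := by simp only [mul_right_inj]; exact r3 _
    _ = b * (a * (b * (c * (b * (a * (b * (c * (a * (b * (a * (c))))))))))) := by first | (simp only [mul_right_inj]; exact r1 _) | exact r1 _
    _ = b * (a * (c * (b * (c * (a * (b * (c * (a * (b * (a * (c))))))))))) := by simp only [mul_right_inj]; exact r2 _
    _ = b * (a * (c * (b * (c * (a * (b * (c * (b * (a * (b * (c))))))))))) := by first | (simp only [mul_right_inj]; exact r1 _) | exact r1 _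
    _ = b * (a * (c * (b * (c * (a * (c * (b * (c * (a * (b * (c))))))))))) := by simp only [mul_right_inj]; exact r2 _
    _ = b * (a * (c * (b * (a * (c * (a * (b * (c * (a * (b * (c))))))))))) := by simp only [mul_right_inj]; exact r3 _
    _ = b * a * c * b * a * c * (a * b * c * a * b * c) := by simp only [mul_assoc]
end

section
/- Let G be a group and g, h ∈ G such that C_G(g) = C_G(gⁿ) for all nonzero integers n and C_G(h) = C_G(hᵐ) for all nonzero integers m. If the cyclic subgroups ⟨g⟩ and ⟨h⟩ have finite-index subgroups that commute elementwise, then ⟨g⟩ and ⟨h⟩ commute elementwise. -/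
namespace Subgroup

variable {G : Type*} [Group G]

theorem exists_zpow_mem_of_finiteIndex_subgroupOf_zpowers {H : Subgroup G} {g : G}
    (hH : (H.subgroupOf (zpowers g)).FiniteIndex) : ∃ n : ℤ, n ≠ 0 ∧ g ^ n ∈ H := by
  obtain ⟨n, hn, -, hgn⟩ := exists_pow_mem_of_relIndex_ne_zero hH.index_ne_zero (mem_zpowers g)
  exact ⟨n, by exact_mod_cast hn.ne', by exact_mod_cast (mem_inf.mp hgn).1⟩

end Subgroup

open Subgroup in
theorem Commute.of_zpow_left_of_centralizer_eq {G : Type*} [Group G] {g y : G} {n : ℤ}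
    (hcen : centralizer {g} = centralizer {g ^ n}) (hc : Commute (g ^ n) y) : Commute g y := by
  have hy : y ∈ centralizer {g ^ n} := mem_centralizer_singleton_iff.mpr hc.eq.symm
  rw [← hcen] at hy
  exact (mem_centralizer_singleton_iff.mp hy).symm

/-- If the centralizer of `g` equals the centralizer of every nonzero power of
`g`, and similarly for `h`, and the cyclic subgroups `⟨g⟩` and `⟨h⟩` have
finite-index subgroups that commute elementwise, then `⟨g⟩` and `⟨h⟩` commute
elementwise. -/
theorem stmt_18 {G : Type*} [Group G] (g h : G)
    (hg : ∀ n : ℤ, n ≠ 0 → Subgroup.centralizer {g} = Subgroup.centralizer {g ^ n})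
    (hh : ∀ m : ℤ, m ≠ 0 → Subgroup.centralizer {h} = Subgroup.centralizer {h ^ m})
    (hfin : ∃ H K : Subgroup G, H ≤ Subgroup.zpowers g ∧ K ≤ Subgroup.zpowers h ∧
      (H.subgroupOf (Subgroup.zpowers g)).FiniteIndex ∧
      (K.subgroupOf (Subgroup.zpowers h)).FiniteIndex ∧
      ∀ x ∈ H, ∀ y ∈ K, Commute x y) :
    ∀ x ∈ Subgroup.zpowers g, ∀ y ∈ Subgroup.zpowers h, Commute x y := by
  obtain ⟨H, K, -, -, hH, hK, hHK⟩ := hfin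
  obtain ⟨n, hn, hgn⟩ := Subgroup.exists_zpow_mem_of_finiteIndex_subgroupOf_zpowers hH
  obtain ⟨m, hm, hhm⟩ := Subgroup.exists_zpow_mem_of_finiteIndex_subgroupOf_zpowers hK
  have hg_hm : Commute g (h ^ m) := (hHK _ hgn _ hhm).of_zpow_left_of_centralizer_eq (hg n hn)
  have hgh : Commute g h := (hg_hm.symm.of_zpow_left_of_centralizer_eq (hh m hm)).symm
  rintro x ⟨a, rfl⟩ y ⟨b, rfl⟩
  exact hgh.zpow_zpow a b
end
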